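/- Let 1 ≤ d ≤ p and Y ∈ ℝ^{d×p} be a full-rank matrix with singular values σ_1(Y) ≥ ... ≥ σ_d(Y) > 0. For each j, let v_j be the span of all rows of Y except the j-th, and let d_j be the Euclidean distance from the j-th row y_j to the subspace v_j. Then ∑_{j=1}^d σ_j(Y)^{-2} = ∑_{j=1}^d ⟨(YY*)^{-1} e_j, e_j⟩ = ∑_{j=1}^d d_j^{-2}. -/

import Mathlib

/-!
The `σ j ^ 2` are the eigenvalues of `Y Yᵀ` with multiplicity, so the `(σ j ^ 2)⁻¹` are those of
`(Y Yᵀ)⁻¹`: up to normalisation, the characteristic polynomial of an inverse is the reverse of the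
original one. The first sum is therefore the trace of `(Y Yᵀ)⁻¹`.

For the second equality, `Y Yᵀ` is the Gram matrix of the rows `y k`, and
`z = ∑ k, (Y Yᵀ)⁻¹ j k • y k` is dual to them: `⟪y i, z⟫ = δ i j`. Hence `z ⊥ v j`,
`‖z‖ ^ 2 = (Y Yᵀ)⁻¹ j j =: c`, and `y j - c⁻¹ • z ∈ v j`, so `c⁻¹ • z` is the component of `y j`
orthogonal to `v j` and `d(y j, v j) ^ 2 = ‖c⁻¹ • z‖ ^ 2 = c⁻¹`.
-/

open Matrix Polynomial
open scoped InnerProductSpace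

namespace Polynomial

theorem reverse_one {R : Type*} [Semiring R] : (1 : R[X]).reverse = 1 := by
  simpa using reverse_C (1 : R)

theorem reverse_X_sub_C {R : Type*} [Ring R] (a : R) : (X - C a).reverse = 1 - C a * X := by
  nontriviality R
  have hX : (X : R[X]).reverse = 1 := by simpa [reverse_one] using reverse_X_mul (1 : R[X])
  rw [sub_eq_add_neg, ← C_neg, reverse_add_C, hX, natDegree_X, pow_one, C_neg, neg_mul,
    ← sub_eq_add_neg]

theorem reverse_prod_X_sub_C {R ι : Type*} [CommRing R] [NoZeroDivisors R] (s : Finset ι)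
    (a : ι → R) : (∏ i ∈ s, (X - C (a i))).reverse = ∏ i ∈ s, (1 - C (a i) * X) := by
  classical
  induction s using Finset.induction_on with
  | empty => simp [reverse_one]
  | insert i s hi ih =>
    rw [Finset.prod_insert hi, Finset.prod_insert hi, reverse_mul_of_domain, ih, reverse_X_sub_C]

end Polynomial

namespace Matrix

variable {n K : Type*} [Fintype n] [DecidableEq n] [Field K] {A : Matrix n n K} {μ : n → K}

theorem det_eq_prod_of_charpoly_eq_prod (h : A.charpoly = ∏ i, (X - C (μ i))) :
    A.det = ∏ i, μ i := by
  rw [det_eq_sign_charpoly_coeff, h, coeff_zero_prod, ← Finset.card_univ, ← Finset.prod_const,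
    ← Finset.prod_mul_distrib]
  simp

theorem trace_eq_sum_of_charpoly_eq_prod (h : A.charpoly = ∏ i, (X - C (μ i))) :
    A.trace = ∑ i, μ i := by
  rw [trace_eq_neg_charpoly_nextCoeff, h, prod_X_sub_C_nextCoeff, neg_neg]

theorem charpoly_inv_eq_prod_of_charpoly_eq_prod (h : A.charpoly = ∏ i, (X - C (μ i)))
    (hμ : ∀ i, μ i ≠ 0) : A⁻¹.charpoly = ∏ i, (X - C (μ i)⁻¹) := by
  have hdet : A.det = ∏ i, μ i := det_eq_prod_of_charpoly_eq_prod h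
  have hA : IsUnit A := (isUnit_iff_isUnit_det A).2 <|
    hdet ▸ (Finset.prod_ne_zero_iff.2 fun i _ => hμ i).isUnit
  have hfactor : ∀ i, X - C (μ i)⁻¹ = -C (μ i)⁻¹ * (1 - C (μ i) * X) := fun i => by
    rw [mul_sub, mul_one, ← mul_assoc, neg_mul, ← C_mul, inv_mul_cancel₀ (hμ i), C_1]
    ring
  rw [charpoly_inv A hA, ← reverse_charpoly, h, reverse_prod_X_sub_C, hdet, Ring.inverse_eq_inv',
    Finset.prod_congr rfl fun i _ => hfactor i, Finset.prod_mul_distrib, Finset.prod_neg,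
    ← map_prod, Finset.prod_inv_distrib, Finset.card_univ, mul_assoc]

theorem trace_inv_eq_sum_inv_of_charpoly_eq_prod (h : A.charpoly = ∏ i, (X - C (μ i)))
    (hμ : ∀ i, μ i ≠ 0) : A⁻¹.trace = ∑ i, (μ i)⁻¹ :=
  trace_eq_sum_of_charpoly_eq_prod (charpoly_inv_eq_prod_of_charpoly_eq_prod h hμ)

end Matrix

section InnerProductSpace

variable {E : Type*} [NormedAddCommGroup E] [InnerProductSpace ℝ E]

theorem Submodule.infDist_eq_norm_sub_of_sub_mem_orthogonal {K : Submodule ℝ E} {u v : E}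
    (hv : v ∈ K) (huv : u - v ∈ Kᗮ) : Metric.infDist u K = ‖u - v‖ := by
  rw [Metric.infDist_eq_iInf, (norm_eq_iInf_iff_real_inner_eq_zero K hv).2
    ((K.mem_orthogonal' _).1 huv)]
  simp only [dist_eq_norm]

variable {ι : Type*} [Fintype ι] [DecidableEq ι]

theorem inner_sum_inv_gram_smul {v : ι → E} (hv : IsUnit (gram ℝ v).det) (j i : ι) :
    ⟪v i, ∑ k, (gram ℝ v)⁻¹ j k • v k⟫_ℝ = (1 : Matrix ι ι ℝ) j i := by
  rw [← nonsing_inv_mul _ hv, mul_apply, inner_sum]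
  simp only [inner_smul_right, gram_apply, real_inner_comm]

theorem inv_gram_apply_self {v : ι → E} (hv : IsUnit (gram ℝ v).det) (j : ι) :
    (gram ℝ v)⁻¹ j j = (Metric.infDist (v j) (Submodule.span ℝ (v '' {k | k ≠ j})) ^ 2)⁻¹ := by
  set K := Submodule.span ℝ (v '' {k | k ≠ j})
  set c := (gram ℝ v)⁻¹ j j
  set z := ∑ k, (gram ℝ v)⁻¹ j k • v k
  have hdual : ∀ i, ⟪v i, z⟫_ℝ = (1 : Matrix ι ι ℝ) j i := inner_sum_inv_gram_smul hv j
  have hzK : z ∈ Kᗮ := by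
    refine (Submodule.isOrtho_span.2 ?_).ge (Submodule.mem_span_singleton_self z)
    rintro _ ⟨k, hk, rfl⟩ _ rfl
    rw [hdual k, one_apply_ne' hk]
  have hnorm : ‖z‖ ^ 2 = c := by
    rw [← real_inner_self_eq_norm_sq, sum_inner]
    simp [real_inner_smul_left, hdual, one_apply, c]
  have hc : c ≠ 0 := by
    intro h0
    have hz : z = 0 := by rw [← norm_eq_zero, ← sq_eq_zero_iff, hnorm, h0]
    simpa [hz] using hdual j
  have hproj : v j - c⁻¹ • z ∈ K := by
    have hrest : z - c • v j ∈ K := by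
      rw [← Finset.sum_erase_eq_sub (Finset.mem_univ j)]
      exact K.sum_mem fun k hk =>
        K.smul_mem _ (Submodule.subset_span ⟨k, Finset.ne_of_mem_erase hk, rfl⟩)
    convert K.smul_mem (-c⁻¹) hrest using 1
    rw [smul_sub, smul_smul, neg_mul, inv_mul_cancel₀ hc, neg_smul, neg_smul, one_smul]
    abel
  have hperp : v j - (v j - c⁻¹ • z) ∈ Kᗮ := by simpa using Kᗮ.smul_mem c⁻¹ hzK
  rw [Submodule.infDist_eq_norm_sub_of_sub_mem_orthogonal hproj hperp, sub_sub_cancel, norm_smul,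
    mul_pow, hnorm, Real.norm_eq_abs, sq_abs]
  field_simp

end InnerProductSpace

theorem Matrix.mul_transpose_self_eq_gram {m n : Type*} [Fintype n] (Y : Matrix m n ℝ) :
    Y * Yᵀ = gram ℝ (fun i => (EuclideanSpace.equiv n ℝ).symm (Y i)) := by
  ext i k
  simp [gram_apply, mul_apply, EuclideanSpace.inner_eq_star_dotProduct, dotProduct, mul_comm]

theorem negative_second_moment_identity_general
    (d p : ℕ)
    (Y : Matrix (Fin d) (Fin p) ℝ)
    (σ : Fin d → ℝ) (hσpos : ∀ j, 0 < σ j)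
    (hσ : (Y * Yᵀ).charpoly = ∏ j : Fin d, (X - C ((σ j) ^ 2)))
    (dist : Fin d → ℝ)
    (hdist : ∀ j, dist j = Metric.infDist
      ((EuclideanSpace.equiv (Fin p) ℝ).symm (Y j))
      (Submodule.span ℝ ((fun k : Fin d => (EuclideanSpace.equiv (Fin p) ℝ).symm (Y k)) ''
        {k | k ≠ j}) : Set (EuclideanSpace ℝ (Fin p)))) :
    (∑ j : Fin d, ((σ j) ^ 2)⁻¹) = ∑ j : Fin d, (Y * Yᵀ)⁻¹ j j ∧
    (∑ j : Fin d, (Y * Yᵀ)⁻¹ j j) = ∑ j : Fin d, ((dist j) ^ 2)⁻¹ := by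
  have hσsq : ∀ j, σ j ^ 2 ≠ 0 := fun j => pow_ne_zero 2 (hσpos j).ne'
  have hdet : IsUnit (Y * Yᵀ).det := by
    rw [det_eq_prod_of_charpoly_eq_prod hσ]
    exact (Finset.prod_ne_zero_iff.2 fun j _ => hσsq j).isUnit
  refine ⟨(trace_inv_eq_sum_inv_of_charpoly_eq_prod hσ hσsq).symm,
    Finset.sum_congr rfl fun j _ => ?_⟩
  rw [hdist j]
  rw [mul_transpose_self_eq_gram] at hdet ⊢
  exact inv_gram_apply_self hdet j

/-- Negative second moment identity: for a full-rank `d × p` real matrix `Y` (`1 ≤ d ≤ p`)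
with singular values `σ 0 ≥ σ 1 ≥ ... ≥ σ (d-1) > 0` (so that `(σ j)^2` are the eigenvalues
of `Y Yᵀ`, encoded via the characteristic polynomial), and `v j` the span of the rows of `Y`
other than the `j`-th, we have
`∑ j σ j ^ (-2) = ∑ j ⟨(Y Yᵀ)⁻¹ e j, e j⟩ = ∑ j d(y j, v j) ^ (-2)`. -/
theorem negative_second_moment_identity
    (d p : ℕ) (hd : 1 ≤ d) (hdp : d ≤ p)
    (Y : Matrix (Fin d) (Fin p) ℝ) (hrank : Y.rank = d)
    (σ : Fin d → ℝ) (hσpos : ∀ j, 0 < σ j) (hσmono : Antitone σ)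
    (hσ : (Y * Yᵀ).charpoly = ∏ j : Fin d, (X - C ((σ j) ^ 2)))
    (dist : Fin d → ℝ)
    (hdist : ∀ j, dist j = Metric.infDist
      ((EuclideanSpace.equiv (Fin p) ℝ).symm (Y j))
      (Submodule.span ℝ ((fun k : Fin d => (EuclideanSpace.equiv (Fin p) ℝ).symm (Y k)) ''
        {k | k ≠ j}) : Set (EuclideanSpace ℝ (Fin p)))) :
    (∑ j : Fin d, ((σ j) ^ 2)⁻¹) = ∑ j : Fin d, (Y * Yᵀ)⁻¹ j j ∧
    (∑ j : Fin d, (Y * Yᵀ)⁻¹ j j) = ∑ j : Fin d, ((dist j) ^ 2)⁻¹ :=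
  negative_second_moment_identity_general d p Y σ hσpos hσ dist hdist
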